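/- The square of the quartic G = z₁z₂z₃(z₄³+z₅³+z₆³−z₇³−z₈³−z₉³) + z₄z₅z₆(−z₁³−z₂³−z₃³+z₇³+z₈³+z₉³) + z₇z₈z₉(z₁³+z₂³+z₃³−z₄³−z₅³−z₆³) lies in the ideal generated by the 5×5 (maximal) minors of the matrix CS(z) in K[z₁,…,z₉]. -/

import Mathlib

/-!
`-G²` is an explicit combination `∑ c_k Δ_k` of nine maximal minors `Δ_k` of `CS(z)` whose
coefficients `c_k` are quadratic monomials (a certificate found by computer). It is a polynomial
identity over `ℤ`, so it holds with `z` any family in any commutative ring.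
-/

open MvPolynomial

namespace Matrix

variable {m n R : Type*} [Fintype m] [DecidableEq m] [CommRing R]

def maximalMinorIdeal (M : Matrix m n R) : Ideal R :=
  Ideal.span {d | ∃ g : m → n, d = (M.submatrix id g).det}

theorem det_submatrix_mem_maximalMinorIdeal (M : Matrix m n R) (g : m → n) :
    (M.submatrix id g).det ∈ M.maximalMinorIdeal :=
  Ideal.subset_span ⟨g, rfl⟩

theorem sum_mul_det_submatrix_mem_maximalMinorIdeal {ι : Type*} [Fintype ι] (M : Matrix m n R)
    (c : ι → R) (g : ι → m → n) :
    ∑ k, c k * (M.submatrix id (g k)).det ∈ M.maximalMinorIdeal :=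
  Ideal.sum_mem _ fun k _ => Ideal.mul_mem_left _ _ (det_submatrix_mem_maximalMinorIdeal M (g k))

end Matrix

section

variable {R : Type*} [CommRing R]

def csMatrix (z : Fin 9 → R) : Matrix (Fin 5) (Fin 9) R :=
  !![(z 0)^2, (z 1)^2, (z 2)^2, (z 3)^2, (z 4)^2, (z 5)^2, (z 6)^2, (z 7)^2, (z 8)^2;
     z 1*z 2, z 0*z 2, z 0*z 1, z 4*z 5, z 3*z 5, z 3*z 4, z 7*z 8, z 6*z 8, z 6*z 7;
     z 3*z 6, z 4*z 7, z 5*z 8, z 0*z 6, z 1*z 7, z 2*z 8, z 0*z 3, z 1*z 4, z 2*z 5;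
     z 4*z 8, z 5*z 6, z 3*z 7, z 2*z 7, z 0*z 8, z 1*z 6, z 1*z 5, z 2*z 3, z 0*z 4;
     z 5*z 7, z 3*z 8, z 4*z 6, z 1*z 8, z 2*z 6, z 0*z 7, z 2*z 4, z 0*z 5, z 1*z 3]

def quarticG (z : Fin 9 → R) : R :=
  z 0*z 1*z 2*((z 3)^3+(z 4)^3+(z 5)^3-(z 6)^3-(z 7)^3-(z 8)^3)
  + z 3*z 4*z 5*(-(z 0)^3-(z 1)^3-(z 2)^3+(z 6)^3+(z 7)^3+(z 8)^3)
  + z 6*z 7*z 8*((z 0)^3+(z 1)^3+(z 2)^3-(z 3)^3-(z 4)^3-(z 5)^3)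

def quarticGCertColumns : Fin 9 → Fin 5 → Fin 9 :=
  ![![0,1,2,3,7], ![0,1,2,4,8], ![0,1,2,5,6], ![0,3,4,5,8], ![0,4,6,7,8],
    ![1,3,4,5,6], ![1,5,6,7,8], ![2,3,4,5,7], ![2,3,6,7,8]]

def quarticGCertCoeff (z : Fin 9 → R) : Fin 9 → R :=
  ![z 3*z 7, z 4*z 8, z 5*z 6, z 0*z 8, z 0*z 4, z 1*z 6, z 1*z 5, z 2*z 7, z 2*z 3]

theorem neg_quarticG_sq_eq_sum_mul_det (z : Fin 9 → R) :
    -quarticG z ^ 2 = ∑ k, quarticGCertCoeff z k *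
      ((csMatrix z).submatrix id (quarticGCertColumns k)).det := by
  -- iterated Laplace expansion along the first row, with the `succAbove` indices evaluated
  simp only [Fin.sum_univ_succ, Fin.sum_univ_zero, Matrix.det_succ_row_zero, Matrix.det_fin_zero,
    Matrix.submatrix_apply, Fin.succAbove, Fin.reduceSucc, Fin.reduceCastSucc, Fin.reduceLT,
    ite_true, ite_false, Fin.val_zero, Fin.val_succ, pow_zero, pow_succ, Fin.isValue, id]
  simp only [csMatrix, quarticGCertColumns, quarticGCertCoeff, quarticG, Matrix.of_apply,
    Matrix.cons_val, Matrix.cons_val_zero, Matrix.cons_val_one]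
  ring

theorem quarticG_sq_mem_maximalMinorIdeal (z : Fin 9 → R) :
    quarticG z ^ 2 ∈ (csMatrix z).maximalMinorIdeal := by
  rw [← neg_mem_iff, neg_quarticG_sq_eq_sum_mul_det]
  exact Matrix.sum_mul_det_submatrix_mem_maximalMinorIdeal _ _ _

end

theorem stmt19_general {K : Type*} [Field K] :
    let z : Fin 9 → MvPolynomial (Fin 9) K := fun i => X i
    let CS : Matrix (Fin 5) (Fin 9) (MvPolynomial (Fin 9) K) :=
      !![(z 0)^2, (z 1)^2, (z 2)^2, (z 3)^2, (z 4)^2, (z 5)^2, (z 6)^2, (z 7)^2, (z 8)^2;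
         z 1*z 2, z 0*z 2, z 0*z 1, z 4*z 5, z 3*z 5, z 3*z 4, z 7*z 8, z 6*z 8, z 6*z 7;
         z 3*z 6, z 4*z 7, z 5*z 8, z 0*z 6, z 1*z 7, z 2*z 8, z 0*z 3, z 1*z 4, z 2*z 5;
         z 4*z 8, z 5*z 6, z 3*z 7, z 2*z 7, z 0*z 8, z 1*z 6, z 1*z 5, z 2*z 3, z 0*z 4;
         z 5*z 7, z 3*z 8, z 4*z 6, z 1*z 8, z 2*z 6, z 0*z 7, z 2*z 4, z 0*z 5, z 1*z 3]
    let G : MvPolynomial (Fin 9) K :=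
      z 0*z 1*z 2*((z 3)^3+(z 4)^3+(z 5)^3-(z 6)^3-(z 7)^3-(z 8)^3)
      + z 3*z 4*z 5*(-(z 0)^3-(z 1)^3-(z 2)^3+(z 6)^3+(z 7)^3+(z 8)^3)
      + z 6*z 7*z 8*((z 0)^3+(z 1)^3+(z 2)^3-(z 3)^3-(z 4)^3-(z 5)^3)
    G^2 ∈ Ideal.span {d : MvPolynomial (Fin 9) K |
      ∃ g : Fin 5 → Fin 9, d = (CS.submatrix id g).det} :=
  quarticG_sq_mem_maximalMinorIdeal X

/-- The square of the quartic `G` lies in the ideal generated by the maximal (5×5)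
minors of `CS(z)` in `K[z₁,…,z₉]`. -/
theorem stmt19 {K : Type*} [Field K] (h2 : (2 : K) ≠ 0) (h3 : (3 : K) ≠ 0) :
    let z : Fin 9 → MvPolynomial (Fin 9) K := fun i => X i
    let CS : Matrix (Fin 5) (Fin 9) (MvPolynomial (Fin 9) K) :=
      !![(z 0)^2, (z 1)^2, (z 2)^2, (z 3)^2, (z 4)^2, (z 5)^2, (z 6)^2, (z 7)^2, (z 8)^2;
         z 1*z 2, z 0*z 2, z 0*z 1, z 4*z 5, z 3*z 5, z 3*z 4, z 7*z 8, z 6*z 8, z 6*z 7;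
         z 3*z 6, z 4*z 7, z 5*z 8, z 0*z 6, z 1*z 7, z 2*z 8, z 0*z 3, z 1*z 4, z 2*z 5;
         z 4*z 8, z 5*z 6, z 3*z 7, z 2*z 7, z 0*z 8, z 1*z 6, z 1*z 5, z 2*z 3, z 0*z 4;
         z 5*z 7, z 3*z 8, z 4*z 6, z 1*z 8, z 2*z 6, z 0*z 7, z 2*z 4, z 0*z 5, z 1*z 3]
    let G : MvPolynomial (Fin 9) K :=
      z 0*z 1*z 2*((z 3)^3+(z 4)^3+(z 5)^3-(z 6)^3-(z 7)^3-(z 8)^3)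
      + z 3*z 4*z 5*(-(z 0)^3-(z 1)^3-(z 2)^3+(z 6)^3+(z 7)^3+(z 8)^3)
      + z 6*z 7*z 8*((z 0)^3+(z 1)^3+(z 2)^3-(z 3)^3-(z 4)^3-(z 5)^3)
    G^2 ∈ Ideal.span {d : MvPolynomial (Fin 9) K |
      ∃ g : Fin 5 → Fin 9, d = (CS.submatrix id g).det} :=
  stmt19_general
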